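/- arXiv:2305.17284 — 4 statements merged into one kernel-verified Lean document; each statement's English description precedes it below -/
import Mathlib

section
/- Let n, D be positive integers, let Â be an n×n real matrix, and let X be an n×D real matrix. Let g : (Fin D → ℝ) → (Fin D → ℝ) be differentiable at the point (Â * X) i (the i-th row of Â * X) for every i : Fin n. Define F : Matrix (Fin n) (Fin D) ℝ → Matrix (Fin n) (Fin D) ℝ by (F X') i = g ((Â * X') i), i.e., g is applied to each row of Â * X' independently and identically. Then F is differentiable at X, and the absolute value of the determinant of its Fréchet derivative at X satisfies |det (fderiv ℝ F X)| = |det Â|^D · ∏_{i : Fin n} |det (fderiv ℝ g ((Â * X) i))|, where the determinant of a continuous linear endomorphism means LinearMap.det of its underlying linear map. -/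
attribute [local instance] Matrix.normedAddCommGroup Matrix.normedSpace

open ContinuousLinearMap

/-- Transposing turns left multiplication by `A` into `A` acting on each column separately. -/
theorem det_mulLeftLinearMap {m n R : Type*} [Fintype m] [DecidableEq m] [Fintype n]
    [CommRing R] (A : Matrix m m R) :
    (mulLeftLinearMap n R A).det = A.det ^ Fintype.card n := by
  let e := (Matrix.transposeLinearEquiv m n R R).trans (Matrix.ofLinearEquiv R).symm
  have hcols : e.toLinearMap ∘ₗ mulLeftLinearMap n R A ∘ₗ e.symm.toLinearMap =
      LinearMap.pi fun j => (Matrix.toLin' A).comp (LinearMap.proj j) := by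
    ext Y j i
    simp [e, Matrix.mul_apply, Matrix.mulVec, dotProduct, mul_comm]
  rw [← LinearMap.det_conj _ e, hcols, LinearMap.det_pi]
  simp [LinearMap.det_toLin']

theorem hasFDerivAt_pi_map {ι 𝕜 E F : Type*} [Fintype ι] [NontriviallyNormedField 𝕜]
    [NormedAddCommGroup E] [NormedSpace 𝕜 E] [NormedAddCommGroup F] [NormedSpace 𝕜 F]
    {g : ι → E → F} {g' : ι → E →L[𝕜] F} {y : ι → E}
    (hg : ∀ i, HasFDerivAt (g i) (g' i) (y i)) :
    HasFDerivAt (fun (y' : ι → E) i => g i (y' i)) (pi fun i => (g' i).comp (proj i)) y :=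
  hasFDerivAt_pi.mpr fun i => (hg i).comp y (hasFDerivAt_apply i y)

theorem gcflow_determinant_lemma_general (n D : ℕ)
    (Ahat : Matrix (Fin n) (Fin n) ℝ) (X : Matrix (Fin n) (Fin D) ℝ)
    (g : (Fin D → ℝ) → (Fin D → ℝ))
    (hg : ∀ i : Fin n, DifferentiableAt ℝ g ((Ahat * X) i))
    (F : Matrix (Fin n) (Fin D) ℝ → Matrix (Fin n) (Fin D) ℝ)
    (hF : ∀ (X' : Matrix (Fin n) (Fin D) ℝ) (i : Fin n), F X' i = g ((Ahat * X') i)) :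
    DifferentiableAt ℝ F X ∧
      |LinearMap.det (fderiv ℝ F X).toLinearMap| =
        |Ahat.det| ^ D * ∏ i : Fin n, |LinearMap.det (fderiv ℝ g ((Ahat * X) i)).toLinearMap| := by
  let L : Matrix (Fin n) (Fin D) ℝ →L[ℝ] Matrix (Fin n) (Fin D) ℝ :=
    (mulLeftLinearMap (Fin D) ℝ Ahat).toContinuousLinearMap
  let T : Matrix (Fin n) (Fin D) ℝ →L[ℝ] Matrix (Fin n) (Fin D) ℝ :=
    pi fun i => (fderiv ℝ g ((Ahat * X) i)).comp (proj i)
  have hF_comp : F = (fun Y i => g (Y i)) ∘ L := funext fun X' => funext (hF X')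
  have hF' : HasFDerivAt F (T.comp L) X :=
    hF_comp ▸ (hasFDerivAt_pi_map fun i => (hg i).hasFDerivAt).comp X L.hasFDerivAt
  have hT : LinearMap.det (T : Matrix (Fin n) (Fin D) ℝ →ₗ[ℝ] Matrix (Fin n) (Fin D) ℝ) =
      ∏ i, LinearMap.det (fderiv ℝ g ((Ahat * X) i)).toLinearMap :=
    det_pi _
  have hL : LinearMap.det (L : Matrix (Fin n) (Fin D) ℝ →ₗ[ℝ] Matrix (Fin n) (Fin D) ℝ) =
      Ahat.det ^ D := by
    simpa [L] using det_mulLeftLinearMap (n := Fin D) Ahat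
  refine ⟨hF'.differentiableAt, ?_⟩
  rw [hF'.fderiv, toLinearMap_comp, LinearMap.det_comp, hT, hL, abs_mul, abs_pow,
    Finset.abs_prod, mul_comm]

/-- **Determinant Lemma** (Lemma 4.1 of the GC-Flow paper): if `F` applies a map `g`
(differentiable at the relevant points) to each row of `Ahat * X'` independently and
identically, then `F` is differentiable at `X` and
`|det (fderiv ℝ F X)| = |det Ahat|^D * ∏ i, |det (fderiv ℝ g ((Ahat * X) i))|`. -/
theorem gcflow_determinant_lemma (n D : ℕ) (hn : 0 < n) (hD : 0 < D)
    (Ahat : Matrix (Fin n) (Fin n) ℝ) (X : Matrix (Fin n) (Fin D) ℝ)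
    (g : (Fin D → ℝ) → (Fin D → ℝ))
    (hg : ∀ i : Fin n, DifferentiableAt ℝ g ((Ahat * X) i))
    (F : Matrix (Fin n) (Fin D) ℝ → Matrix (Fin n) (Fin D) ℝ)
    (hF : ∀ (X' : Matrix (Fin n) (Fin D) ℝ) (i : Fin n), F X' i = g ((Ahat * X') i)) :
    DifferentiableAt ℝ F X ∧
      |LinearMap.det (fderiv ℝ F X).toLinearMap| =
        |Ahat.det| ^ D * ∏ i : Fin n, |LinearMap.det (fderiv ℝ g ((Ahat * X) i)).toLinearMap| :=
  gcflow_determinant_lemma_general n D Ahat X g hg F hF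
end

section
/- Let n, D be positive integers, let Â : Matrix (Fin n) (Fin n) ℝ, and let J : Fin n → Matrix (Fin D) (Fin D) ℝ be a family of D×D real matrices. Define the (nD)×(nD) real matrix M : Matrix (Fin n × Fin D) (Fin n × Fin D) ℝ by M (i, j) (p, q) = Â i p * (J i) j q. Then |det M| = |det Â|^D · ∏_{i : Fin n} |det (J i)|. -/
open Matrix

/-- The block-structured `(nD)×(nD)` matrix `M` with `M (i,j) (p,q) = Ahat i p * (J i) j q`
has `|det M| = |det Ahat|^D * ∏ i, |det (J i)|`. -/
theorem gcflow_block_det (n D : ℕ) (hn : 0 < n) (hD : 0 < D)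
    (Ahat : Matrix (Fin n) (Fin n) ℝ) (J : Fin n → Matrix (Fin D) (Fin D) ℝ)
    (M : Matrix (Fin n × Fin D) (Fin n × Fin D) ℝ)
    (hM : ∀ (i : Fin n) (j : Fin D) (p : Fin n) (q : Fin D),
      M (i, j) (p, q) = Ahat i p * (J i) j q) :
    |M.det| = |Ahat.det| ^ D * ∏ i : Fin n, |(J i).det| := by
  set B : Matrix (Fin n × Fin D) (Fin n × Fin D) ℝ :=
    (Matrix.blockDiagonal J).submatrix (Equiv.prodComm (Fin n) (Fin D))
      (Equiv.prodComm (Fin n) (Fin D)) with hB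
  set K : Matrix (Fin n × Fin D) (Fin n × Fin D) ℝ :=
    Matrix.kroneckerMap (· * ·) Ahat (1 : Matrix (Fin D) (Fin D) ℝ) with hK
  have hMBK : M = B * K := by
    ext ⟨i, j⟩ ⟨p, q⟩
    rw [hM]
    simp only [Matrix.mul_apply, hB, hK, Matrix.submatrix_apply, Equiv.prodComm_apply,
      Prod.swap_prod_mk, Matrix.blockDiagonal_apply, Matrix.kroneckerMap_apply,
      Matrix.one_apply, Fintype.sum_prod_type]
    rw [Finset.sum_eq_single i]
    · rw [Finset.sum_eq_single q] <;> simp +contextual [mul_comm]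
    · intro r _ hr
      simp [hr, Ne.symm hr]
    · simp
  have hdetB : B.det = ∏ i : Fin n, (J i).det := by
    rw [hB, Matrix.det_submatrix_equiv_self, Matrix.det_blockDiagonal]
  have hdetK : K.det = Ahat.det ^ D := by
    rw [hK, Matrix.det_kronecker]
    simp [Fintype.card_fin]
  rw [hMBK, Matrix.det_mul, abs_mul, hdetB, hdetK, abs_pow, Finset.abs_prod, mul_comm]
end

section
/- Let ω be a real number and let ε be uniformly distributed on the open interval (0,1) (i.e., Lebesgue measure restricted to (0,1)). Then the probability of the event {ε ∈ (0,1) : log ε − log(1 − ε) + ω > 0} equals (1 + exp(−ω))⁻¹. -/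
open MeasureTheory

/-- With `ε` uniformly distributed on `(0,1)`, the probability that
`log ε - log (1 - ε) + ω > 0` equals the logistic sigmoid `(1 + exp (-ω))⁻¹`. -/
theorem gumbel_sigmoid_prob (ω : ℝ) :
    (volume.restrict (Set.Ioo (0 : ℝ) 1))
        {ε : ℝ | Real.log ε - Real.log (1 - ε) + ω > 0} =
      ENNReal.ofReal (1 + Real.exp (-ω))⁻¹ := by
  have hE : (0:ℝ) < Real.exp ω := Real.exp_pos ω
  have hE' : (0:ℝ) < Real.exp (-ω) := Real.exp_pos (-ω)
  have hmul : Real.exp (-ω) * Real.exp ω = 1 := by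
    rw [← Real.exp_add]; simp
  set c : ℝ := (1 + Real.exp ω)⁻¹ with hc
  have hden : (0:ℝ) < 1 + Real.exp ω := by linarith
  have hc0 : 0 < c := by positivity
  have hc1 : c < 1 := by
    rw [hc, inv_lt_one_iff₀]; right; linarith
  rw [Measure.restrict_apply' measurableSet_Ioo]
  have hset : {ε : ℝ | Real.log ε - Real.log (1 - ε) + ω > 0} ∩ Set.Ioo 0 1
      = Set.Ioo c 1 := by
    ext ε
    simp only [Set.mem_inter_iff, Set.mem_setOf_eq, Set.mem_Ioo]
    constructor
    · rintro ⟨h, h0, h1⟩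
      refine ⟨?_, h1⟩
      have h1' : 0 < 1 - ε := by linarith
      have hlog : Real.log ε - Real.log (1 - ε) = Real.log (ε / (1 - ε)) := by
        rw [Real.log_div (by linarith) (by linarith)]
      have h2 : -ω < Real.log (ε / (1 - ε)) := by rw [← hlog]; linarith
      have h3 : Real.exp (-ω) < ε / (1 - ε) :=
        (Real.lt_log_iff_exp_lt (by positivity)).mp h2
      have h4 : Real.exp (-ω) * (1 - ε) < ε := by
        rwa [lt_div_iff₀ h1'] at h3
      rw [hc, inv_lt_iff_one_lt_mul₀ hden]
      nlinarith
    · rintro ⟨h, h1⟩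
      have h0 : 0 < ε := lt_trans hc0 h
      have h1' : 0 < 1 - ε := by linarith
      refine ⟨?_, h0, h1⟩
      have h4 : Real.exp (-ω) * (1 - ε) < ε := by
        rw [hc, inv_lt_iff_one_lt_mul₀ hden] at h
        nlinarith
      have h3 : Real.exp (-ω) < ε / (1 - ε) := by
        rwa [lt_div_iff₀ h1']
      have h2 : -ω < Real.log (ε / (1 - ε)) :=
        (Real.lt_log_iff_exp_lt (by positivity)).mpr h3
      have hlog : Real.log ε - Real.log (1 - ε) = Real.log (ε / (1 - ε)) := by
        rw [Real.log_div (by linarith) (by linarith)]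
      rw [hlog]; linarith
  rw [hset, Real.volume_Ioo]
  congr 1
  have hden' : (0:ℝ) < 1 + Real.exp (-ω) := by linarith
  rw [hc]
  field_simp
  nlinarith
end

section
/- Let ω be a real number. For τ > 0 and ε ∈ (0,1), define e_τ(ε) = (1 + exp(−(log ε − log(1 − ε) + ω)/τ))⁻¹, i.e., e_τ(ε) = σ((log ε − log(1−ε) + ω)/τ) where σ is the logistic sigmoid. Then for every threshold c with 0 < c < 1, the probability (with ε uniformly distributed on (0,1)) of the event {ε ∈ (0,1) : e_τ(ε) > c} tends to (1 + exp(−ω))⁻¹ as τ → 0⁺. In other words, e_τ converges in distribution to a Bernoulli random variable with success probability p = (1 + exp(−ω))⁻¹. -/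
/-!
Since `σ` is a strictly increasing bijection `ℝ → (0,1)` with inverse `logit a = log a - log (1 - a)`,
the event `σ((logit ε + ω)/τ) > c` is `logit ε > τ · logit c - ω`, i.e. `ε > σ(τ · logit c - ω)`.
Its probability under the uniform law is `1 - σ(τ · logit c - ω) = σ(ω - τ · logit c)`, which is
continuous in `τ` and equals `σ ω` at `τ = 0`.
-/

open MeasureTheory Filter Set

namespace Real

noncomputable def logit (a : ℝ) : ℝ := log a - log (1 - a)

lemma sigmoid_logit {a : ℝ} (h0 : 0 < a) (h1 : a < 1) : sigmoid (logit a) = a := by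
  rw [sigmoid_def, logit, neg_sub, exp_sub, exp_log (sub_pos.2 h1), exp_log h0]
  field_simp
  ring

lemma lt_sigmoid_iff_logit_lt {a x : ℝ} (h0 : 0 < a) (h1 : a < 1) :
    a < sigmoid x ↔ logit a < x := by
  simpa only [sigmoid_logit h0 h1] using sigmoid_lt_iff (a := logit a) (b := x)

lemma sigmoid_lt_iff_lt_logit {a x : ℝ} (h0 : 0 < a) (h1 : a < 1) :
    sigmoid x < a ↔ x < logit a := by
  simpa only [sigmoid_logit h0 h1] using sigmoid_lt_iff (a := x) (b := logit a)

/-- The logit of a uniform random variable on `(0,1)` has the logistic distribution. -/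
lemma volume_restrict_Ioo_setOf_lt_logit (t : ℝ) :
    volume.restrict (Ioo 0 1) {ε | t < logit ε} = ENNReal.ofReal (sigmoid (-t)) := by
  have hset : {ε | t < logit ε} ∩ Ioo 0 1 = Ioo (sigmoid t) 1 := by
    ext ε
    simp only [mem_inter_iff, mem_ofPred_eq, mem_Ioo]
    constructor
    · rintro ⟨ht, h0, h1⟩
      exact ⟨(sigmoid_lt_iff_lt_logit h0 h1).2 ht, h1⟩
    · rintro ⟨ht, h1⟩
      have h0 : 0 < ε := (sigmoid_pos t).trans ht
      exact ⟨(sigmoid_lt_iff_lt_logit h0 h1).1 ht, h0, h1⟩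
  rw [Measure.restrict_apply' measurableSet_Ioo, hset, volume_Ioo, sigmoid_neg]

end Real

open Real in
/-- For every threshold `0 < c < 1`, the probability (with `ε` uniform on `(0,1)`) that
`σ((log ε - log (1 - ε) + ω) / τ) > c` tends to `(1 + exp (-ω))⁻¹` as `τ → 0⁺`, where
`σ (x) = (1 + exp (-x))⁻¹` is the logistic sigmoid: the relaxed sample converges in
distribution to a Bernoulli random variable with success probability `(1 + exp (-ω))⁻¹`. -/
theorem gumbel_softmax_limit (ω : ℝ) (c : ℝ) (hc0 : 0 < c) (hc1 : c < 1) :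
    Tendsto
      (fun τ : ℝ =>
        (volume.restrict (Set.Ioo (0 : ℝ) 1))
          {ε : ℝ | (1 + Real.exp (-((Real.log ε - Real.log (1 - ε) + ω) / τ)))⁻¹ > c})
      (nhdsWithin 0 (Set.Ioi 0))
      (nhds (ENNReal.ofReal (1 + Real.exp (-ω))⁻¹)) := by
  have hevent : ∀ τ > 0,
      {ε : ℝ | (1 + exp (-((log ε - log (1 - ε) + ω) / τ)))⁻¹ > c}
        = {ε | τ * logit c - ω < logit ε} := by
    intro τ hτ
    ext ε
    change c < sigmoid ((logit ε + ω) / τ) ↔ _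
    rw [mem_ofPred_eq, lt_sigmoid_iff_logit_lt hc0 hc1, lt_div_iff₀ hτ]
    constructor <;> intro h <;> linarith
  have hlim : Tendsto (fun τ : ℝ => ENNReal.ofReal (sigmoid (ω - τ * logit c)))
      (nhdsWithin 0 (Ioi 0)) (nhds (ENNReal.ofReal (sigmoid ω))) := by
    have hcont : Continuous (fun τ : ℝ => ENNReal.ofReal (sigmoid (ω - τ * logit c))) :=
      ENNReal.continuous_ofReal.comp (by fun_prop)
    simpa using (hcont.tendsto 0).mono_left nhdsWithin_le_nhds
  refine hlim.congr' ?_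
  filter_upwards [self_mem_nhdsWithin] with τ hτ
  rw [hevent τ hτ, volume_restrict_Ioo_setOf_lt_logit, neg_sub]
end
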